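/- Let X be the 8-dimensional nilmanifold Lie algebra with (1,0)-form basis satisfying dφ¹ = dφ² = 0, dφ³ = φ¹∧φ², dφ⁴ = φ¹∧φ³. Then ω_C = A φ¹∧φ² + B φ¹∧φ³ + C φ¹∧φ⁴ + D φ²∧φ³ with A,B,C,D ∈ ℂ and C·D ≠ 0 is a closed (2,0)-form with ω_C ∧ ω_C ≠ 0, and conversely every closed invariant (2,0)-form lies in the span of φ¹∧φ², φ¹∧φ³, φ¹∧φ⁴, φ²∧φ³. -/

import Mathlib

/-!
Since `dφ¹ = dφ² = 0`, `dφ³ = φ¹²` and `dφ⁴ = φ¹³`, the Leibniz rule gives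
`dΩ = θ φ¹²³ + ζ φ¹²⁴`, and anticommutation of the generators gives
`ω_C ∧ ω_C = 2 C D φ¹²³⁴`. The wedge monomials `φ¹²³, φ¹²⁴, φ¹²³⁴` of increasing indices are
members of the standard basis of the exterior algebra, so `dΩ = 0` forces `θ = ζ = 0` and
`ω_C ∧ ω_C ≠ 0` exactly when `C D ≠ 0`.
-/

/-
Model: exterior algebra over ℂ on generators gen 0..3 = φ¹..φ⁴, gen 4..7 = φ̄¹..φ̄⁴;
d determined by the structure equations (and conjugates) and the Leibniz rule.
-/

noncomputable section

abbrev E := ExteriorAlgebra ℂ (Fin 8 → ℂ)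

def gen (i : Fin 8) : E := ExteriorAlgebra.ι ℂ (Pi.single i 1)

def dgen : Fin 8 → E :=
  ![0, 0, gen 0 * gen 1, gen 0 * gen 2, 0, 0, gen 4 * gen 5, gen 4 * gen 6]

def d2 (i j : Fin 8) : E := dgen i * gen j - gen i * dgen j

/-- generic invariant (2,0)-form Ω = α φ¹² + β φ¹³ + γ φ¹⁴ + τ φ²³ + θ φ²⁴ + ζ φ³⁴. -/
def Om (a b c d e f : ℂ) : E :=
  a • (gen 0 * gen 1) + b • (gen 0 * gen 2) + c • (gen 0 * gen 3) +
  d • (gen 1 * gen 2) + e • (gen 1 * gen 3) + f • (gen 2 * gen 3)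

def dOm (a b c d e f : ℂ) : E :=
  a • d2 0 1 + b • d2 0 2 + c • d2 0 3 + d • d2 1 2 + e • d2 1 3 + f • d2 2 3

open ExteriorAlgebra

theorem ExteriorAlgebra.basis_eq_prod_sort {R M I : Type*} [CommRing R] [AddCommGroup M]
    [Module R M] [LinearOrder I] (b : Module.Basis I R M) (s : Finset I) :
    b.ExteriorAlgebra s = ((s.sort (· ≤ ·)).map fun i => ι R (b i)).prod := by
  rw [basis_apply_ofCard b rfl, ιMulti_family, ιMulti_apply, List.ofFn_eq_map,
    Set.powersetCard.ofFinEmbEquiv_symm_apply, ← Finset.listMap_orderEmbOfFin_finRange s rfl,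
    List.map_map]
  rfl

theorem ExteriorAlgebra.basis_toFinset_eq_prod {R M I : Type*} [CommRing R] [AddCommGroup M]
    [Module R M] [LinearOrder I] (b : Module.Basis I R M) {l : List I}
    (hl : l.Pairwise (· < ·)) :
    b.ExteriorAlgebra l.toFinset = (l.map fun i => ι R (b i)).prod := by
  rw [basis_eq_prod_sort, (List.toFinset_sort _ hl.nodup).2 (hl.imp le_of_lt)]

abbrev monomialBasis : Module.Basis (Finset (Fin 8)) ℂ E :=
  (Pi.basisFun ℂ (Fin 8)).ExteriorAlgebra

lemma prod_map_gen {l : List (Fin 8)} (hl : l.Pairwise (· < ·)) :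
    (l.map gen).prod = monomialBasis l.toFinset := by
  rw [basis_toFinset_eq_prod _ hl]
  simp only [Pi.basisFun_apply]
  rfl

lemma gen_mul_gen_mul_gen {i j k : Fin 8} (hij : i < j) (hjk : j < k) :
    gen i * (gen j * gen k) = monomialBasis [i, j, k].toFinset := by
  rw [← prod_map_gen (by simp [hij, hjk, hij.trans hjk])]
  simp

lemma gen_mul_gen_mul_gen_mul_gen {i j k l : Fin 8} (hij : i < j) (hjk : j < k) (hkl : k < l) :
    gen i * (gen j * (gen k * gen l)) = monomialBasis [i, j, k, l].toFinset := by
  rw [← prod_map_gen (by simp [hij, hjk, hkl, hij.trans hjk, hjk.trans hkl,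
    (hij.trans hjk).trans hkl])]
  simp

lemma gen_mul_self (i : Fin 8) : gen i * gen i = 0 := ι_sq_zero _

lemma gen_anticomm (i j : Fin 8) : gen j * gen i = -(gen i * gen j) :=
  (neg_eq_of_add_eq_zero_right (ι_add_mul_swap _ _)).symm

lemma gen_mul_self_mul (i : Fin 8) (x : E) : gen i * (gen i * x) = 0 := by
  rw [← mul_assoc, gen_mul_self, zero_mul]

lemma gen_anticomm_mul (i j : Fin 8) (x : E) : gen j * (gen i * x) = -(gen i * (gen j * x)) := by
  rw [← mul_assoc, gen_anticomm, neg_mul, mul_assoc]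

lemma dOm_eq (a b c d e f : ℂ) :
    dOm a b c d e f = e • (gen 0 * (gen 1 * gen 2)) + f • (gen 0 * (gen 1 * gen 3)) := by
  simp [dOm, d2, dgen, mul_assoc, gen_anticomm_mul 0 1, gen_anticomm_mul 0 2, gen_mul_self_mul,
    gen_mul_self]

lemma Om_mul_self (A B C D : ℂ) :
    Om A B C D 0 0 * Om A B C D 0 0 = (2 * C * D) • (gen 0 * (gen 1 * (gen 2 * gen 3))) := by
  simp only [Om, zero_smul, add_zero, mul_add, add_mul, smul_mul_assoc, mul_smul_comm, mul_assoc,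
    smul_smul, gen_anticomm 1 2, gen_anticomm 1 3, gen_anticomm 2 3, gen_anticomm_mul 0 1,
    gen_anticomm_mul 0 2, gen_anticomm_mul 0 3, gen_anticomm_mul 1 2, gen_anticomm_mul 1 3,
    gen_mul_self, gen_mul_self_mul, mul_zero, mul_neg, neg_neg, smul_zero, zero_add, neg_zero]
  module

lemma dOm_eq_zero_iff (a b c d e f : ℂ) : dOm a b c d e f = 0 ↔ e = 0 ∧ f = 0 := by
  rw [dOm_eq, gen_mul_gen_mul_gen (by decide) (by decide),
    gen_mul_gen_mul_gen (by decide) (by decide)]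
  refine ⟨(LinearIndepOn.pair_iff monomialBasis (by decide)).1
    (monomialBasis.linearIndependent.linearIndepOn _) e f, ?_⟩
  rintro ⟨rfl, rfl⟩
  simp

lemma Om_mul_self_ne_zero_iff (A B C D : ℂ) :
    Om A B C D 0 0 * Om A B C D 0 0 ≠ 0 ↔ C * D ≠ 0 := by
  rw [Om_mul_self, gen_mul_gen_mul_gen_mul_gen (by decide) (by decide) (by decide), Ne,
    smul_eq_zero, or_iff_left (monomialBasis.ne_zero _), mul_assoc]
  simp

theorem stmt17 :
    (∀ A B C D : ℂ, C * D ≠ 0 →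
        dOm A B C D 0 0 = 0 ∧ Om A B C D 0 0 * Om A B C D 0 0 ≠ 0) ∧
    (∀ α β γ τ θ ζ : ℂ, dOm α β γ τ θ ζ = 0 →
        Om α β γ τ θ ζ ∈ Submodule.span ℂ
          ({gen 0 * gen 1, gen 0 * gen 2, gen 0 * gen 3, gen 1 * gen 2} : Set E)) := by
  refine ⟨fun A B C D hCD => ⟨(dOm_eq_zero_iff ..).2 ⟨rfl, rfl⟩,
    (Om_mul_self_ne_zero_iff ..).2 hCD⟩, fun α β γ τ θ ζ h => ?_⟩
  obtain ⟨rfl, rfl⟩ := (dOm_eq_zero_iff ..).1 h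
  simp only [Om, zero_smul, add_zero]
  refine add_mem (add_mem (add_mem ?_ ?_) ?_) ?_ <;>
    exact Submodule.smul_mem _ _ (Submodule.subset_span (by simp))

end
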